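/- arXiv:2006.00198 — 7 statements merged into one kernel-verified Lean document; each statement's English description precedes it below -/
import Mathlib

section
/- Let n ≥ t ≥ 1 and k₊ ≥ k₋ ≥ 0 be integers, let p be a prime with k₊ + k₋ + 1 = p, and let C be a linear code of length n over the field with p elements that is a perfect code of radius t (every vector of 𝔽ₚⁿ is within Hamming distance t of exactly one codeword of C). Then Λ = {x ∈ ℤⁿ : (x mod p) ∈ C} is an additive subgroup of ℤⁿ, and the error-ball B(n,t,k₊,k₋) tiles ℤⁿ by Λ. -/
open Finset

/-- Hamming weight of an integer vector: the number of nonzero entries. -/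
def wt {n : ℕ} (x : Fin n → ℤ) : ℕ := (Finset.univ.filter (fun i => x i ≠ 0)).card

/-- The `(n,t,k₊,k₋)`-error-ball in `ℤⁿ`. -/
def errBall (n t : ℕ) (kp km : ℤ) : Set (Fin n → ℤ) :=
  {x | (∀ i, -km ≤ x i ∧ x i ≤ kp) ∧ wt x ≤ t}

/-- `Tiles B T` : every `z ∈ ℤⁿ` is uniquely `z = v + b` with `v ∈ T` and `b ∈ B`. -/
def Tiles {n : ℕ} (B T : Set (Fin n → ℤ)) : Prop :=
  ∀ z : Fin n → ℤ, ∃! p : (Fin n → ℤ) × (Fin n → ℤ),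
    p.1 ∈ T ∧ p.2 ∈ B ∧ z = p.1 + p.2

/-! Since `[-k₋, k₊]` is a complete residue system mod `p` containing `0`, reduction mod `p`
maps the box `[-k₋, k₊]ⁿ` bijectively onto `𝔽ₚⁿ` and preserves Hamming weight. Hence it carries
the error-ball bijectively onto the Hamming ball of radius `t`, and the tiling of `𝔽ₚⁿ` by the
perfect code `C` pulls back along reduction to a tiling of `ℤⁿ` by `Λ`. -/

theorem ZMod.intCast_bijOn_Ico {p : ℕ} [NeZero p] (a : ℤ) :
    Set.BijOn (Int.cast : ℤ → ZMod p) (Set.Ico a (a + p)) Set.univ := by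
  have hp : (0 : ℤ) < p := by exact_mod_cast Nat.pos_of_ne_zero (NeZero.ne p)
  refine ⟨Set.mapsTo_univ _ _, ?_, ?_⟩
  · rintro x ⟨hx₁, hx₂⟩ y ⟨hy₁, hy₂⟩ hxy
    have hdvd : (p : ℤ) ∣ y - x := (ZMod.intCast_eq_intCast_iff_dvd_sub x y p).mp hxy
    have := Int.eq_zero_of_abs_lt_dvd hdvd (abs_sub_lt_iff.mpr ⟨by omega, by omega⟩)
    omega
  · intro r _
    obtain ⟨x, rfl⟩ := ZMod.intCast_surjective r
    refine ⟨a + (x - a) % p, ⟨?_, ?_⟩, ?_⟩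
    · have := Int.emod_nonneg (x - a) hp.ne'
      omega
    · have := Int.emod_lt_of_pos (x - a) hp
      omega
    · rw [Int.cast_add, ZMod.intCast_mod, Int.cast_sub, add_sub_cancel]

def reduceMod (n p : ℕ) : (Fin n → ℤ) →+ (Fin n → ZMod p) :=
  (Int.castAddHom (ZMod p)).compLeft (Fin n)

section Box

variable {n p : ℕ} {S : Set ℤ}

theorem injOn_reduceMod (hS : Set.InjOn (Int.cast : ℤ → ZMod p) S) :
    Set.InjOn (reduceMod n p) {x | ∀ i, x i ∈ S} :=
  fun _ hx _ hy hxy => funext fun i => hS (hx i) (hy i) (congrFun hxy i)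

theorem hammingNorm_reduceMod_eq_wt (hS : Set.InjOn (Int.cast : ℤ → ZMod p) S) (h0 : 0 ∈ S)
    {x : Fin n → ℤ} (hx : ∀ i, x i ∈ S) : hammingNorm (reduceMod n p x) = wt x := by
  refine congrArg Finset.card (Finset.filter_congr fun i _ => not_congr ?_)
  exact ⟨fun h => hS (hx i) h0 (by simpa [reduceMod] using h), fun h => by simp [reduceMod, h]⟩

theorem image_reduceMod_eq_hammingNorm_le (hS : Set.BijOn (Int.cast : ℤ → ZMod p) S Set.univ)
    (h0 : 0 ∈ S) (t : ℕ) :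
    reduceMod n p '' {x | (∀ i, x i ∈ S) ∧ wt x ≤ t} = {e | hammingNorm e ≤ t} := by
  ext e
  constructor
  · rintro ⟨x, ⟨hx, hwt⟩, rfl⟩
    simpa [hammingNorm_reduceMod_eq_wt hS.injOn h0 hx] using hwt
  · intro he
    choose x hxS hxe using fun i => hS.surjOn (Set.mem_univ (e i))
    have hred : reduceMod n p x = e := funext hxe
    refine ⟨x, ⟨hxS, ?_⟩, hred⟩
    rwa [← hammingNorm_reduceMod_eq_wt hS.injOn h0 hxS, hred]

end Box

theorem tiles_comap {n : ℕ} {H : Type*} [AddCommGroup H] (φ : (Fin n → ℤ) →+ H)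
    (K : AddSubgroup H) {B : Set (Fin n → ℤ)} (hB : Set.InjOn φ B)
    (hK : ∀ y, ∃! c, c ∈ K ∧ y - c ∈ φ '' B) :
    Tiles B (K.comap φ) := by
  intro z
  obtain ⟨c, ⟨hcK, b, hb, hbc⟩, hc⟩ := hK (φ z)
  refine ⟨(z - b, b), ⟨?_, hb, (sub_add_cancel z b).symm⟩, ?_⟩
  · show φ (z - b) ∈ K
    rwa [map_sub, hbc, sub_sub_cancel]
  · rintro ⟨v', b'⟩ ⟨hv', hb', rfl⟩
    have hc' : φ v' = c := hc _ ⟨hv', b', hb', by rw [map_add, add_sub_cancel_left]⟩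
    have hbb : b' = b := hB hb' hb (by rw [hbc, map_add, hc', add_sub_cancel_left])
    subst hbb
    simp

theorem stmt_2_general (n t : ℕ) (kp km : ℤ)
    (hkm : 0 ≤ km) (hkp : km ≤ kp)
    (p : ℕ) (hsum : kp + km + 1 = (p : ℤ))
    (C : Submodule (ZMod p) (Fin n → ZMod p))
    (hperfect : ∀ y : Fin n → ZMod p, ∃! c : Fin n → ZMod p,
      c ∈ C ∧ hammingDist y c ≤ t) :
    ∃ Λ : AddSubgroup (Fin n → ℤ),
      (Λ : Set (Fin n → ℤ)) = {x : Fin n → ℤ | (fun i => ((x i : ZMod p))) ∈ C} ∧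
      Tiles (errBall n t kp km) (Λ : Set (Fin n → ℤ)) := by
  have : NeZero p := ⟨by rintro rfl; omega⟩
  have hS : Set.BijOn (Int.cast : ℤ → ZMod p) (Set.Icc (-km) kp) Set.univ := by
    convert ZMod.intCast_bijOn_Ico (p := p) (-km) using 1
    ext; simp only [Set.mem_Icc, Set.mem_Ico]; omega
  have h0 : (0 : ℤ) ∈ Set.Icc (-km) kp := ⟨by omega, by omega⟩
  refine ⟨C.toAddSubgroup.comap (reduceMod n p), rfl,
    tiles_comap _ _ ((injOn_reduceMod hS.injOn).mono fun x hx => hx.1) fun y => ?_⟩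
  have hball : errBall n t kp km = {x | (∀ i, x i ∈ Set.Icc (-km) kp) ∧ wt x ≤ t} := rfl
  refine (existsUnique_congr fun c => ?_).mp (hperfect y)
  rw [hball, image_reduceMod_eq_hammingNorm_le hS h0, Set.mem_ofPred_eq,
    Submodule.mem_toAddSubgroup, hammingDist_comm, hammingDist_eq_hammingNorm, neg_add_eq_sub]

theorem stmt_2 (n t : ℕ) (kp km : ℤ) (ht : 1 ≤ t) (htn : t ≤ n)
    (hkm : 0 ≤ km) (hkp : km ≤ kp)
    (p : ℕ) (hp : p.Prime) (hsum : kp + km + 1 = (p : ℤ))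
    (C : Submodule (ZMod p) (Fin n → ZMod p))
    (hperfect : ∀ y : Fin n → ZMod p, ∃! c : Fin n → ZMod p,
      c ∈ C ∧ hammingDist y c ≤ t) :
    ∃ Λ : AddSubgroup (Fin n → ℤ),
      (Λ : Set (Fin n → ℤ)) = {x : Fin n → ℤ | (fun i => ((x i : ZMod p))) ∈ C} ∧
      Tiles (errBall n t kp km) (Λ : Set (Fin n → ℤ)) :=
  stmt_2_general n t kp km hkm hkp p hsum C hperfect
end

section
/- Let n ≥ t + 1 ≥ 2 and k₊ ≥ k₋ ≥ 0 be integers with k₊ and k₋ not both 0. If ∑_{i=0}^{t} C(n,i)·(k₊+k₋)^i < (k₊+1)^{t+1} − (k₊−k₋)^{t+1}, then there is no set T ⊆ ℤⁿ such that the error-ball B(n,t,k₊,k₋) tiles ℤⁿ by T. -/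
open Finset

/-!
If `B` tiles `ℤⁿ` by `T`, sending a point to its `B`-component is injective on every finite `S`
with `S - S ⊆ B - B`: if `x, y` share the component `b` and `x - y = d - d'` with `d, d' ∈ B`, then
`v_x + d' = v_y + d` has two decompositions. Take for `S` the points of `{0,…,k₊}^s` (zero off a
set `s` of `t + 1` coordinates) having some coordinate `≤ k₋`; it has
`(k₊+1)^(t+1) - (k₊-k₋)^(t+1)` elements, while counting by support gives
`|B| ≤ ∑ C(n,i) (k₊+k₋)^i`. For `x, y ∈ S` there are `j, j' ∈ s` with `x_j - y_j ≤ k₋` and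
`x_{j'} - y_{j'} ≥ -k₋`, distinct unless `x_j = y_j`; subtracting from both `x` and `y` the vector
equal to `x_j` at `j`, `y_{j'}` at `j'` and `min (x_i) (y_i)` elsewhere leaves two elements of `B`,
each vanishing at a coordinate of `s`.
-/

open scoped Pointwise

variable {n : ℕ}

theorem Tiles.eq_of_add_eq {B T : Set (Fin n → ℤ)} (hT : Tiles B T) {v w b b' : Fin n → ℤ}
    (hv : v ∈ T) (hw : w ∈ T) (hb : b ∈ B) (hb' : b' ∈ B) (h : v + b = w + b') : v = w :=
  congrArg Prod.fst ((hT (v + b)).unique (y₁ := (v, b)) (y₂ := (w, b')) ⟨hv, hb, rfl⟩ ⟨hw, hb', h⟩)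

theorem Tiles.card_le_ncard {B T : Set (Fin n → ℤ)} (hT : Tiles B T) (hB : B.Finite)
    (S : Finset (Fin n → ℤ)) (hS : ∀ x ∈ S, ∀ y ∈ S, x - y ∈ B - B) : S.card ≤ B.ncard := by
  choose p hpT hpB hp using fun z => (hT z).exists
  rw [← Set.ncard_coe_finset]
  refine Set.ncard_le_ncard_of_injOn (fun z => (p z).2) (fun z _ => hpB z) ?_ hB
  intro x hx y hy hxy
  obtain ⟨d, hd, d', hd', hdd⟩ := Set.mem_sub.1 (hS x hx y hy)
  simp only at hxy
  have hv : (p x).1 = (p y).1 := by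
    refine hT.eq_of_add_eq (hpT x) (hpT y) hd' hd ?_
    linear_combination hp y - hp x - hdd - hxy
  rw [hp x, hp y, hv, hxy]

def boxOn (s : Finset (Fin n)) (A : Finset ℤ) : Finset (Fin n → ℤ) :=
  Fintype.piFinset fun i => if i ∈ s then A else {0}

theorem mem_boxOn {s : Finset (Fin n)} {A : Finset ℤ} {x : Fin n → ℤ} :
    x ∈ boxOn s A ↔ (∀ i ∈ s, x i ∈ A) ∧ ∀ i ∉ s, x i = 0 := by
  simp only [boxOn, Fintype.mem_piFinset]
  refine ⟨fun h => ⟨fun i hi => by simpa [hi] using h i, fun i hi => by simpa [hi] using h i⟩,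
    fun h i => ?_⟩
  split_ifs with hi
  exacts [h.1 i hi, mem_singleton.2 (h.2 i hi)]

theorem card_boxOn (s : Finset (Fin n)) (A : Finset ℤ) : (boxOn s A).card = A.card ^ s.card := by
  simp [boxOn, Fintype.card_piFinset, apply_ite card, Finset.prod_ite_mem]

theorem errBall_subset_biUnion_boxOn (t : ℕ) (kp km : ℤ) :
    errBall n t kp km ⊆ ↑((range (t + 1)).biUnion fun i =>
      (powersetCard i univ).biUnion fun s => boxOn (n := n) s ((Icc (-km) kp).erase 0)) := by
  rintro x ⟨hbd, hwt⟩
  simp only [coe_biUnion, coe_range, Set.mem_Iio, Set.mem_iUnion, mem_coe, mem_powersetCard,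
    exists_prop]
  refine ⟨wt x, Nat.lt_succ_of_le hwt, _, ⟨subset_univ _, rfl⟩, mem_boxOn.2 ⟨?_, ?_⟩⟩
  · intro i hi
    simpa [(mem_filter.1 hi).2] using hbd i
  · intro i hi
    simpa using hi

theorem errBall_finite (t : ℕ) (kp km : ℤ) : (errBall n t kp km).Finite :=
  (finite_toSet _).subset (errBall_subset_biUnion_boxOn t kp km)

theorem ncard_errBall_le (t : ℕ) {kp km : ℤ} (hkp : 0 ≤ kp) (hkm : 0 ≤ km) :
    ((errBall n t kp km).ncard : ℤ) ≤
      ∑ i ∈ range (t + 1), (n.choose i : ℤ) * (kp + km) ^ i := by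
  have hA : ((Icc (-km) kp).erase 0).card = (kp + km).toNat := by
    rw [card_erase_of_mem (by simp [hkp, hkm]), Int.card_Icc]
    omega
  have hcard := ((Set.ncard_le_ncard (errBall_subset_biUnion_boxOn (n := n) t kp km)
    (finite_toSet _)).trans_eq (Set.ncard_coe_finset _)).trans card_biUnion_le
  refine (Nat.cast_le.2 hcard).trans ?_
  push_cast
  refine sum_le_sum fun i _ => ?_
  refine (Nat.cast_le.2 card_biUnion_le).trans_eq ?_
  push_cast [card_boxOn, hA, Int.toNat_of_nonneg (add_nonneg hkp hkm)]
  rw [sum_congr rfl fun s hs => by rw [(mem_powersetCard.1 hs).2], sum_const, card_powersetCard,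
    card_univ, Fintype.card_fin, nsmul_eq_mul]

noncomputable def shell (s : Finset (Fin n)) (kp km : ℤ) : Finset (Fin n → ℤ) :=
  boxOn s (Icc 0 kp) \ boxOn s (Icc (km + 1) kp)

theorem card_shell (s : Finset (Fin n)) {kp km : ℤ} (hkm : 0 ≤ km) (hkp : km ≤ kp) :
    ((shell s kp km).card : ℤ) = (kp + 1) ^ s.card - (kp - km) ^ s.card := by
  have hsub : boxOn s (Icc (km + 1) kp) ⊆ boxOn s (Icc 0 kp) :=
    Fintype.piFinset_subset _ _ fun i => by
      split_ifs
      exacts [Icc_subset_Icc_left (by omega), subset_rfl]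
  have hle : (Icc (km + 1) kp).card ^ s.card ≤ (Icc 0 kp).card ^ s.card :=
    Nat.pow_le_pow_left (card_le_card (Icc_subset_Icc_left (by omega))) _
  rw [shell, card_sdiff_of_subset hsub, card_boxOn, card_boxOn, Nat.cast_sub hle]
  push_cast [Int.card_Icc, Int.toNat_of_nonneg (show 0 ≤ kp + 1 - 0 by omega),
    Int.toNat_of_nonneg (show 0 ≤ kp + 1 - (km + 1) by omega)]
  ring

theorem exists_le_of_mem_shell {s : Finset (Fin n)} {kp km : ℤ} {x : Fin n → ℤ}
    (hx : x ∈ shell s kp km) : ∃ j ∈ s, x j ≤ km := by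
  obtain ⟨hx, hx'⟩ := mem_sdiff.1 hx
  rw [mem_boxOn] at hx hx'
  by_contra! h
  exact hx' ⟨fun i hi => mem_Icc.2 ⟨h i hi, (mem_Icc.1 (hx.1 i hi)).2⟩, hx.2⟩

theorem exists_pair_le_neg_le {ι : Type*} (δ : ι → ℤ) {s : Finset ι} (hs : 1 < s.card) {c : ℤ}
    (hc : 0 ≤ c) (hj : ∃ j ∈ s, δ j ≤ c) (hj' : ∃ j' ∈ s, -c ≤ δ j') :
    ∃ j ∈ s, ∃ j' ∈ s, δ j ≤ c ∧ -c ≤ δ j' ∧ (j = j' → δ j = 0) := by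
  obtain ⟨j, hjs, hj⟩ := hj
  obtain ⟨j', hj's, hj'⟩ := hj'
  by_cases hjj : j = j' → δ j = 0
  · exact ⟨j, hjs, j', hj's, hj, hj', hjj⟩
  obtain ⟨rfl, -⟩ := Classical.not_imp.1 hjj
  obtain ⟨k, hks, hkj⟩ := exists_mem_ne hs j
  rcases le_or_gt 0 (δ k) with hk | hk
  · exact ⟨j, hjs, k, hks, hj, by omega, fun h => absurd h.symm hkj⟩
  · exact ⟨k, hks, j, hjs, by omega, hj', fun h => absurd h hkj⟩

theorem mem_errBall_of_support_subset {t : ℕ} {kp km : ℤ} {x : Fin n → ℤ} {s : Finset (Fin n)}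
    (hbd : ∀ i, -km ≤ x i ∧ x i ≤ kp) (hsupp : ∀ i, x i ≠ 0 → i ∈ s) (hs : s.card ≤ t) :
    x ∈ errBall n t kp km :=
  ⟨hbd, (card_le_card fun i hi => hsupp i (mem_filter.mp hi).2).trans hs⟩

theorem sub_mem_errBall_of_eq_min {t : ℕ} {kp km : ℤ} (hkm : 0 ≤ km) {s : Finset (Fin n)}
    (hst : s.card ≤ t + 1) {x y c : Fin n → ℤ} (hx : x ∈ boxOn s (Icc 0 kp))
    (hy : y ∈ boxOn s (Icc 0 kp)) {j j' : Fin n} (hj : j ∈ s) (hyx : -km ≤ x j' - y j')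
    (hcj : c j = x j) (hcj' : c j' = y j') (hc : ∀ i, i ≠ j → i ≠ j' → c i = min (x i) (y i)) :
    x - c ∈ errBall n t kp km := by
  rw [mem_boxOn] at hx hy
  have hkp : 0 ≤ kp := (mem_Icc.1 (hx.1 j hj)).1.trans (mem_Icc.1 (hx.1 j hj)).2
  have hbd : ∀ i, 0 ≤ x i ∧ x i ≤ kp ∧ 0 ≤ y i ∧ y i ≤ kp := fun i => by
    by_cases hi : i ∈ s
    · have := mem_Icc.1 (hx.1 i hi); have := mem_Icc.1 (hy.1 i hi); omega
    · have := hx.2 i hi; have := hy.2 i hi; omega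
  refine mem_errBall_of_support_subset (s := s.erase j) (fun i => ?_) (fun i hi => ?_) ?_
  · have := hbd i
    simp only [Pi.sub_apply]
    by_cases h : i = j
    · subst h; rw [hcj]; omega
    by_cases h' : i = j'
    · subst h'; rw [hcj']; omega
    rw [hc i h h']; omega
  · refine mem_erase.2 ⟨fun h => hi (by simp [h, hcj]), ?_⟩
    by_contra his
    have hij : i ≠ j := fun h => his (h ▸ hj)
    apply hi
    by_cases h' : i = j'
    · subst h'; simp [hcj', hx.2 i his, hy.2 i his]
    · simp [hc i hij h', hx.2 i his, hy.2 i his]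
  · rw [card_erase_of_mem hj]; omega

theorem sub_mem_errBall_sub {t : ℕ} {kp km : ℤ} (hkm : 0 ≤ km) {s : Finset (Fin n)}
    (hst : s.card ≤ t + 1) {x y : Fin n → ℤ} (hx : x ∈ boxOn s (Icc 0 kp))
    (hy : y ∈ boxOn s (Icc 0 kp)) {j j' : Fin n} (hj : j ∈ s) (hj' : j' ∈ s)
    (hxy : x j - y j ≤ km) (hyx : -km ≤ x j' - y j') (hjj : j = j' → x j = y j) :
    x - y ∈ errBall n t kp km - errBall n t kp km := by
  set c : Fin n → ℤ := fun i => if i = j then x j else if i = j' then y j' else min (x i) (y i)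
  have hcj : c j = x j := if_pos rfl
  have hcj' : c j' = y j' := by
    by_cases h : j' = j
    · subst h; simp [c, hjj rfl]
    · simp [c, h]
  have hc : ∀ i, i ≠ j → i ≠ j' → c i = min (x i) (y i) := fun i h h' => by simp [c, h, h']
  refine Set.mem_sub.2 ⟨x - c, ?_, y - c, ?_, sub_sub_sub_cancel_right x y c⟩
  · exact sub_mem_errBall_of_eq_min hkm hst hx hy hj hyx hcj hcj' hc
  · exact sub_mem_errBall_of_eq_min hkm hst hy hx hj' (by omega) hcj' hcj
      fun i h' h => (hc i h h').trans (min_comm _ _)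

theorem sub_mem_errBall_sub_of_mem_shell {t : ℕ} {kp km : ℤ} (hkm : 0 ≤ km)
    {s : Finset (Fin n)} (hs : 1 < s.card) (hst : s.card ≤ t + 1) {x y : Fin n → ℤ}
    (hx : x ∈ shell s kp km) (hy : y ∈ shell s kp km) :
    x - y ∈ errBall n t kp km - errBall n t kp km := by
  have hxbox := (mem_sdiff.1 hx).1
  have hybox := (mem_sdiff.1 hy).1
  have nonneg (z : Fin n → ℤ) (hz : z ∈ boxOn s (Icc 0 kp)) (i) (hi : i ∈ s) : 0 ≤ z i :=
    (mem_Icc.1 ((mem_boxOn.1 hz).1 i hi)).1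
  obtain ⟨j, hj, hxj⟩ := exists_le_of_mem_shell hx
  obtain ⟨j', hj', hyj'⟩ := exists_le_of_mem_shell hy
  obtain ⟨j, hj, j', hj', hxy, hyx, hjj⟩ := exists_pair_le_neg_le (x - y) hs hkm
    ⟨j, hj, by have := nonneg y hybox j hj; simp only [Pi.sub_apply]; omega⟩
    ⟨j', hj', by have := nonneg x hxbox j' hj'; simp only [Pi.sub_apply]; omega⟩
  exact sub_mem_errBall_sub hkm hst hxbox hybox hj hj' hxy hyx fun h => sub_eq_zero.1 (hjj h)

theorem stmt_4_general (n t : ℕ) (kp km : ℤ) (ht : 1 ≤ t) (htn : t + 1 ≤ n)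
    (hkm : 0 ≤ km) (hkp : km ≤ kp)
    (hlt : ∑ i ∈ Finset.range (t + 1), (n.choose i : ℤ) * (kp + km) ^ i <
      (kp + 1) ^ (t + 1) - (kp - km) ^ (t + 1)) :
    ¬ ∃ T : Set (Fin n → ℤ), Tiles (errBall n t kp km) T := by
  rintro ⟨T, hT⟩
  obtain ⟨s, -, hs⟩ : ∃ s ⊆ (univ : Finset (Fin n)), s.card = t + 1 :=
    exists_subset_card_eq (by simpa using htn)
  have hshell := hT.card_le_ncard (errBall_finite t kp km) (shell s kp km)
    fun x hx y hy => sub_mem_errBall_sub_of_mem_shell hkm (by omega) hs.le hx hy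
  have hcard := card_shell s hkm hkp
  rw [hs] at hcard
  have hball := ncard_errBall_le (n := n) t (hkm.trans hkp) hkm
  have := (Nat.cast_le (α := ℤ)).2 hshell
  linarith

theorem stmt_4 (n t : ℕ) (kp km : ℤ) (ht : 1 ≤ t) (htn : t + 1 ≤ n)
    (hkm : 0 ≤ km) (hkp : km ≤ kp) (hk0 : ¬(kp = 0 ∧ km = 0))
    (hlt : ∑ i ∈ Finset.range (t + 1), (n.choose i : ℤ) * (kp + km) ^ i <
      (kp + 1) ^ (t + 1) - (kp - km) ^ (t + 1)) :
    ¬ ∃ T : Set (Fin n → ℤ), Tiles (errBall n t kp km) T :=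
  stmt_4_general n t kp km ht htn hkm hkp hlt
end

section
/- Let n ≥ 3 and t be integers with n > t and 5t ≥ 4n − 2, and let k₊ = k₋ = k ≥ 2 be an integer. Then there is no set T ⊆ ℤⁿ such that the error-ball B(n,t,k,k) tiles ℤⁿ by T. -/
open Finset

/-!
If two distinct tiles `u, v` satisfy `|uᵢ - vᵢ| ≤ 2k` for all `i`, then fewer than `2(n - t)`
coordinates satisfy `|uᵢ - vᵢ| ≤ k`: otherwise let `b` be `0` on `n - t` of them and `u - v`
clamped to `[-k, k]` elsewhere; then `b` and `b' := b - (u - v)` lie in the ball (`b'` vanishes on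
the other `n - t` close coordinates), and `v + b = u + b'` contradicts uniqueness.

Take a tile `a`, the tile `u` covering `a + (k, …, k)`, and the tile `v` covering `a + p`, where
`p ∈ {k - 1, k}ⁿ` differs from `u - a` in every coordinate; the three tiles are distinct since
every ball element has a zero coordinate. Each coordinate is close (`≤ k`) for at least one of the
pairs `(u, a)`, `(v, a)`, `(u, v)`, and for two of them wherever `v` covers `a + p` without error,
i.e. on at least `n - t` coordinates. Summing, `2n - t ≤ 3 (2(n - t) - 1)`, that is `5t + 3 ≤ 4n`.
-/

section Weight

variable {n t : ℕ}

lemma card_filter_eq_zero_add_wt (x : Fin n → ℤ) : #{i | x i = 0} + wt x = n := by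
  rw [wt, card_filter_add_card_filter_not, card_univ, Fintype.card_fin]

lemma wt_le_of_eq_zero {x : Fin n → ℤ} {s : Finset (Fin n)} (hs : ∀ i ∈ s, x i = 0) :
    wt x ≤ n - #s := by
  have : #s ≤ #{i | x i = 0} := card_le_card fun i hi => by simpa using hs i hi
  have := card_filter_eq_zero_add_wt x
  omega

lemma exists_eq_of_sub_mem_errBall {kp km : ℤ} (htn : t < n) {x y : Fin n → ℤ}
    (h : x - y ∈ errBall n t kp km) : ∃ i, x i = y i := by
  by_contra! hne
  have hzero : #{i | (x - y) i = 0} = 0 := by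
    simpa [sub_eq_zero] using hne
  have := card_filter_eq_zero_add_wt (x - y)
  have := h.2
  omega

end Weight

lemma exists_mem_errBall_sub_mem_errBall {n t : ℕ} {k : ℤ} (hk : 0 ≤ k) {d : Fin n → ℤ}
    (hd : ∀ i, |d i| ≤ 2 * k) (hclose : 2 * (n - t) ≤ #{i | |d i| ≤ k}) :
    ∃ b ∈ errBall n t k k, b - d ∈ errBall n t k k := by
  obtain ⟨A, hA, hcard⟩ := exists_subset_card_eq (show n - t ≤ #{i | |d i| ≤ k} by omega)
  set b : Fin n → ℤ := fun i => if i ∈ A then 0 else max (-k) (min k (d i)) with hb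
  have hb_zero : ∀ i ∈ A, b i = 0 := fun i hi => if_pos hi
  have hbd_zero : ∀ i ∈ ({i | |d i| ≤ k} : Finset (Fin n)) \ A, (b - d) i = 0 := by
    intro i hi
    simp only [mem_sdiff, mem_filter, mem_univ, true_and, abs_le] at hi
    simp only [hb, Pi.sub_apply, if_neg hi.2, max_def, min_def]
    split_ifs <;> omega
  refine ⟨b, ⟨fun i => ?_, ?_⟩, ⟨fun i => ?_, ?_⟩⟩
  · simp only [hb, max_def, min_def]
    split_ifs <;> omega
  · have := wt_le_of_eq_zero hb_zero
    omega
  · have := hd i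
    simp only [hb, Pi.sub_apply, abs_le, max_def, min_def] at this ⊢
    split_ifs with hiA
    · have := hA hiA
      simp only [mem_filter, mem_univ, true_and, abs_le] at this
      omega
    all_goals omega
  · have := wt_le_of_eq_zero hbd_zero
    rw [card_sdiff_of_subset hA] at this
    omega

namespace Tiles

variable {n : ℕ} {B T : Set (Fin n → ℤ)}

lemma exists_sub_mem (hT : Tiles B T) (z : Fin n → ℤ) : ∃ v ∈ T, z - v ∈ B := by
  obtain ⟨⟨v, b⟩, ⟨hv, hb, rfl⟩, -⟩ := hT z
  exact ⟨v, hv, by simpa using hb⟩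

lemma eq_of_add_eq_s6 (hT : Tiles B T) {u v b b' : Fin n → ℤ} (hu : u ∈ T) (hv : v ∈ T)
    (hb : b ∈ B) (hb' : b' ∈ B) (h : u + b = v + b') : u = v := by
  obtain ⟨_, -, huniq⟩ := hT (u + b)
  exact congrArg Prod.fst ((huniq (u, b) ⟨hu, hb, rfl⟩).trans (huniq (v, b') ⟨hv, hb', h⟩).symm)

lemma card_abs_sub_le_lt {t : ℕ} {k : ℤ} (hT : Tiles (errBall n t k k) T) (hk : 0 ≤ k)
    {u v : Fin n → ℤ} (hu : u ∈ T) (hv : v ∈ T) (huv : u ≠ v)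
    (hd : ∀ i, |(u - v) i| ≤ 2 * k) : #{i | |(u - v) i| ≤ k} < 2 * (n - t) := by
  by_contra! h
  obtain ⟨b, hb, hb'⟩ := exists_mem_errBall_sub_mem_errBall hk hd h
  exact huv (hT.eq_of_add_eq_s6 hu hv hb' hb (by abel))

end Tiles

def probe {n : ℕ} (k : ℤ) (c : Fin n → ℤ) : Fin n → ℤ := fun i => if c i = k then k - 1 else k

section Probe

variable {n t : ℕ} {k : ℤ} {c e : Fin n → ℤ}

lemma probe_ne_zero (hk : 2 ≤ k) (i : Fin n) : probe k c i ≠ 0 := by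
  unfold probe; split_ifs <;> omega

lemma probe_ne_self (i : Fin n) : probe k c i ≠ c i := by
  unfold probe; split_ifs <;> omega

lemma abs_le_two_mul_of_probe_sub_mem_errBall (hk : 1 ≤ k)
    (hc : (fun _ => k) - c ∈ errBall n t k k) (he : probe k c - e ∈ errBall n t k k)
    (i : Fin n) : |c i| ≤ 2 * k ∧ |e i| ≤ 2 * k ∧ |(c - e) i| ≤ 2 * k := by
  have := hc.1 i
  have := he.1 i
  simp only [probe, Pi.sub_apply, abs_le] at *
  split_ifs at * <;> omega

lemma add_sub_le_card_abs_le_of_probe_sub_mem_errBall (hk : 1 ≤ k)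
    (hc : (fun _ => k) - c ∈ errBall n t k k) (he : probe k c - e ∈ errBall n t k k) :
    n + (n - t) ≤ #{i | |c i| ≤ k} + #{i | |e i| ≤ k} + #{i | |(c - e) i| ≤ k} := by
  have key : ∀ i, 1 + (if (probe k c - e) i = 0 then 1 else 0) ≤
      (if |c i| ≤ k then 1 else 0) + (if |e i| ≤ k then 1 else 0) +
        (if |(c - e) i| ≤ k then 1 else 0) := by
    intro i
    have := hc.1 i
    have := he.1 i
    simp only [probe, Pi.sub_apply, abs_le] at *
    split_ifs at * <;> omega
  have hexact : n - t ≤ #{i | (probe k c - e) i = 0} := by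
    have := card_filter_eq_zero_add_wt (probe k c - e)
    have := he.2
    omega
  calc n + (n - t) ≤ n + #{i | (probe k c - e) i = 0} := by omega
    _ = ∑ i, (1 + if (probe k c - e) i = 0 then 1 else 0) := by
        rw [sum_add_distrib, card_filter, sum_const, card_univ, Fintype.card_fin, smul_eq_mul,
          mul_one]
    _ ≤ _ := sum_le_sum fun i _ => key i
    _ = _ := by simp only [sum_add_distrib, card_filter]

end Probe

theorem stmt_6_general (n t : ℕ) (k : ℤ) (htn : t < n) (ht : 4 * n ≤ 5 * t + 2)
    (hk : 2 ≤ k) :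
    ¬ ∃ T : Set (Fin n → ℤ), Tiles (errBall n t k k) T := by
  rintro ⟨T, hT⟩
  obtain ⟨a, ha, -⟩ := hT.exists_sub_mem 0
  obtain ⟨u, hu, hc⟩ := hT.exists_sub_mem (a + fun _ => k)
  obtain ⟨v, hv, he⟩ := hT.exists_sub_mem (a + probe k (u - a))
  rw [show a + (fun _ => k) - u = (fun _ => k) - (u - a) by abel] at hc
  rw [show a + probe k (u - a) - v = probe k (u - a) - (v - a) by abel] at he
  have hua : u ≠ a := by
    rintro rfl
    obtain ⟨i, hi⟩ := exists_eq_of_sub_mem_errBall htn hc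
    simp at hi
    omega
  have hva : v ≠ a := by
    rintro rfl
    obtain ⟨i, hi⟩ := exists_eq_of_sub_mem_errBall htn he
    exact probe_ne_zero hk i (by simpa using hi)
  have huv : u ≠ v := by
    rintro rfl
    obtain ⟨i, hi⟩ := exists_eq_of_sub_mem_errBall htn he
    exact probe_ne_self i hi
  have hbound := abs_le_two_mul_of_probe_sub_mem_errBall (by omega) hc he
  have hcount := add_sub_le_card_abs_le_of_probe_sub_mem_errBall (by omega) hc he
  rw [sub_sub_sub_cancel_right] at hbound hcount
  have h₁ := hT.card_abs_sub_le_lt (by omega) hu ha hua fun i => (hbound i).1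
  have h₂ := hT.card_abs_sub_le_lt (by omega) hv ha hva fun i => (hbound i).2.1
  have h₃ := hT.card_abs_sub_le_lt (by omega) hu hv huv fun i => (hbound i).2.2
  omega

theorem stmt_6 (n t : ℕ) (k : ℤ) (hn : 3 ≤ n) (htn : t < n) (ht : 4 * n ≤ 5 * t + 2)
    (hk : 2 ≤ k) :
    ¬ ∃ T : Set (Fin n → ℤ), Tiles (errBall n t k k) T :=
  stmt_6_general n t k htn ht hk
end

section
/- Let n > t ≥ 1 be integers and let A be a finite set of natural numbers with A ⊆ {0, 1, …, C(n,t) − 1} and |A| = C(n−1,t). If, as real numbers, (n/(4t) − 1)·C(n−1,t−1) > 1/2, then A contains two elements a and b such that b = 2a and a ≠ 0. -/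
/-!
Suppose `A` contains no pair `a, 2a` with `a ≠ 0`. For each odd `m` with `2m < C(n,t)` the
pairs `{m, 2m}` are pairwise disjoint and each of them meets the complement of `A` in
`{0, …, C(n,t) - 1}`, so that complement has at least `(C(n,t) + 1) / 4` elements. By Pascal's
rule it has exactly `C(n-1,t-1)` elements, while `t C(n,t) = n C(n-1,t-1)` turns the hypothesis
into `C(n,t) > 4 C(n-1,t-1) + 2`, a contradiction.
-/

open Finset

namespace Nat

theorem mul_choose_eq_mul_choose_pred (n : ℕ) {t : ℕ} (ht : 1 ≤ t) :
    t * n.choose t = n * (n - 1).choose (t - 1) := by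
  obtain ⟨s, rfl⟩ := Nat.exists_eq_add_of_le' ht
  cases n with
  | zero => simp
  | succ m => simpa [mul_comm] using (Nat.add_one_mul_choose_eq m s).symm

theorem four_mul_choose_pred_add_two_lt_choose {n t : ℕ} (ht : 1 ≤ t)
    (h : ((n : ℝ) / (4 * t) - 1) * ((n - 1).choose (t - 1) : ℝ) > 1 / 2) :
    4 * (n - 1).choose (t - 1) + 2 < n.choose t := by
  have ht0 : (0 : ℝ) < t := by exact_mod_cast ht
  have hid : (t : ℝ) * n.choose t = n * (n - 1).choose (t - 1) := by
    exact_mod_cast mul_choose_eq_mul_choose_pred n ht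
  have key : (t : ℝ) * (4 * (n - 1).choose (t - 1) + 2) < t * n.choose t := by
    rw [div_sub_one (by positivity), div_mul_eq_mul_div, gt_iff_lt,
      lt_div_iff₀ (by positivity)] at h
    linarith
  exact_mod_cast lt_of_mul_lt_mul_left key ht0.le

end Nat

theorem le_card_range_sdiff_of_two_mul_notMem {A : Finset ℕ} (N : ℕ)
    (hA : ∀ a ∈ A, a ≠ 0 → 2 * a ∉ A) : (N + 1) / 4 ≤ (range N \ A).card := by
  -- `k` picks the element of the pair `{2k+1, 2(2k+1)}` that lies outside `A`.
  let f : ℕ → ℕ := fun k => if 2 * k + 1 ∈ A then 2 * (2 * k + 1) else 2 * k + 1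
  have hmaps : ∀ k ∈ range ((N + 1) / 4), f k ∈ range N \ A := by
    intro k hk
    rw [mem_range] at hk
    by_cases hodd : 2 * k + 1 ∈ A
    · simpa [f, hodd] using ⟨by omega, hA _ hodd (by omega)⟩
    · simpa [f, hodd] using by omega
  have hinj : Set.InjOn f (range ((N + 1) / 4)) := by
    intro k _ l _ hkl
    by_cases hk : 2 * k + 1 ∈ A <;> by_cases hl : 2 * l + 1 ∈ A <;>
      simp [f, hk, hl] at hkl <;> omega
  simpa using card_le_card_of_injOn f hmaps hinj

theorem stmt_10 (n t : ℕ) (ht : 1 ≤ t) (htn : t < n)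
    (A : Finset ℕ) (hA : A ⊆ Finset.range (n.choose t))
    (hcard : A.card = (n - 1).choose t)
    (hineq : ((n : ℝ) / (4 * (t : ℝ)) - 1) * (((n - 1).choose (t - 1) : ℝ)) > 1 / 2) :
    ∃ a ∈ A, ∃ b ∈ A, b = 2 * a ∧ a ≠ 0 := by
  by_contra! hfree
  have hcompl : (range (n.choose t) \ A).card = (n - 1).choose (t - 1) := by
    rw [card_sdiff_of_subset hA, card_range, hcard,
      Nat.choose_eq_choose_pred_add (by omega) ht, Nat.add_sub_cancel]
  have hlower := le_card_range_sdiff_of_two_mul_notMem (n.choose t)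
    fun a ha ha0 h2a => ha0 (hfree a ha _ h2a rfl)
  have hupper := Nat.four_mul_choose_pred_add_two_lt_choose ht hineq
  omega
end

section
/- Let n ≥ 2 and k₊ ≥ k₋ ≥ 0 be integers with k₊ and k₋ not both 0. Suppose the error-ball B(n,2,k₊,k₋) tiles ℤⁿ by some lattice Λ ⊆ ℤⁿ (additive subgroup of ℤⁿ), and suppose the cardinality |B(n,2,k₊,k₋)| = C(n,2)·(k₊+k₋)² + n·(k₊+k₋) + 1 is even. Then there exists an integer ℓ such that 4·(k₊+k₋)·n = 4ℓ² − (k₊+k₋−3)² + 8. -/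
open Finset

/-!
Since `B = B(n,2,k₊,k₋)` tiles `ℤⁿ` by `Λ`, it is a system of representatives of `ℤⁿ/Λ`, a finite
group of even order `|B|`. Such a group has a nontrivial `±1`-valued character `χ`, so
`∑_{x ∈ B} χ x = 0`. As `χ` is multiplicative over the coordinates, this sum is `1 + e₁(S) + e₂(S)`
with `Sᵢ = ∑_{v ∈ [-k₋, k₊] \ {0}} χ (v eᵢ)`. The parity of `|B|` forces `k = k₊ + k₋` to be odd,
so each `Sᵢ` is either `k` or an alternating sum over an interval of even length minus `1`,
i.e. `-1`; in both cases `Sᵢ² - (k - 1) Sᵢ = k`. With `A = ∑ Sᵢ`, the vanishing sum says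
`(A + 1)² = ∑ Sᵢ² - 1`, and summing the quadratic relation gives `n k = ∑ Sᵢ² - (k - 1) A`;
eliminating `∑ Sᵢ²` yields the claim with `ℓ = A + 1 - (k - 1) / 2`.
-/

section Support

variable {ι A : Type*} [Fintype ι] [DecidableEq ι] [Zero A] [DecidableEq A]

lemma filter_support_eq_piFinset {I : Finset A} (hI : 0 ∈ I) (T : Finset ι) :
    {x ∈ Fintype.piFinset fun _ : ι => I | ({i | x i ≠ 0} : Finset ι) = T} =
      Fintype.piFinset fun i => if i ∈ T then I.erase 0 else {0} := by
  ext x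
  simp only [mem_filter, Fintype.mem_piFinset, Finset.ext_iff, mem_univ, true_and]
  refine ⟨fun ⟨hxI, hxT⟩ i => ?_, fun hx => ⟨fun i => ?_, fun i => ?_⟩⟩
  · split_ifs with hi
    · exact mem_erase.2 ⟨(hxT i).2 hi, hxI i⟩
    · exact mem_singleton.2 (not_not.1 (mt (hxT i).1 hi))
  · have := hx i
    split_ifs at this
    · exact mem_of_mem_erase this
    · rwa [mem_singleton.1 this]
  · have := hx i
    split_ifs at this with hi
    · exact iff_of_true (ne_of_mem_erase this) hi
    · exact iff_of_false (not_not.2 (mem_singleton.1 this)) hi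

lemma sum_filter_support_eq_prod {R : Type*} [CommSemiring R] {I : Finset A} (hI : 0 ∈ I)
    (f : ι → A → R) (hf : ∀ i, f i 0 = 1) (T : Finset ι) :
    ∑ x ∈ Fintype.piFinset (fun _ : ι => I) with ({i | x i ≠ 0} : Finset ι) = T, ∏ i, f i (x i) =
      ∏ i ∈ T, ∑ v ∈ I.erase 0, f i v := by
  rw [filter_support_eq_piFinset hI, ← prod_univ_sum, ← Fintype.prod_ite_mem T]
  refine prod_congr rfl fun i _ => ?_
  split_ifs <;> simp [hf]

end Support

lemma two_mul_sum_powersetCard_two {ι R : Type*} [DecidableEq ι] [CommRing R]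
    (s : Finset ι) (f : ι → R) :
    2 * ∑ T ∈ powersetCard 2 s, ∏ i ∈ T, f i = (∑ i ∈ s, f i) ^ 2 - ∑ i ∈ s, f i ^ 2 := by
  induction s using Finset.induction_on with
  | empty => rw [powersetCard_eq_empty.2 (by simp)]; simp
  | insert a s ha ih =>
    have hdisj : Disjoint (powersetCard 2 s) ((powersetCard 1 s).image (insert a)) := by
      simp only [disjoint_left, mem_image, mem_powersetCard]
      rintro T ⟨hTs, -⟩ ⟨U, -, rfl⟩
      exact ha (hTs (mem_insert_self a U))
    have hinj : Set.InjOn (insert a) (powersetCard 1 s : Set (Finset ι)) := by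
      intro T hT U hU hTU
      rw [← erase_insert (notMem_mono (mem_powersetCard.1 hT).1 ha), hTU,
        erase_insert (notMem_mono (mem_powersetCard.1 hU).1 ha)]
    have hpair : ∀ i ∈ s, ∏ j ∈ insert a {i}, f j = f a * f i := fun i hi =>
      prod_pair (ne_of_mem_of_not_mem hi ha).symm
    rw [powersetCard_succ_insert ha, sum_union hdisj, sum_image hinj, powersetCard_one, sum_map]
    simp only [Function.Embedding.coeFn_mk]
    rw [sum_congr rfl hpair, ← mul_sum, sum_insert ha, sum_insert ha]
    linear_combination ih

noncomputable def ballFinset (n t : ℕ) (kp km : ℤ) : Finset (Fin n → ℤ) :=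
  {x ∈ Fintype.piFinset fun _ => Icc (-km) kp | wt x ≤ t}

section Ball

variable {n t : ℕ} {kp km : ℤ}

lemma coe_ballFinset : (ballFinset n t kp km : Set (Fin n → ℤ)) = errBall n t kp km := by
  ext x
  simp [ballFinset, errBall, Fintype.mem_piFinset]

lemma card_Icc_erase_zero (hkm : 0 ≤ km) (hkp : 0 ≤ kp) :
    (#((Icc (-km) kp).erase 0) : ℤ) = kp + km := by
  rw [card_erase_of_mem (by simp; omega), Int.card_Icc]
  omega

lemma sum_ballFinset_prod {R : Type*} [CommSemiring R] (hkm : 0 ≤ km) (hkp : 0 ≤ kp)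
    (f : Fin n → ℤ → R) (hf : ∀ i, f i 0 = 1) :
    ∑ x ∈ ballFinset n t kp km, ∏ i, f i (x i) =
      ∑ j ∈ range (t + 1), ∑ T ∈ powersetCard j univ,
        ∏ i ∈ T, ∑ v ∈ (Icc (-km) kp).erase 0, f i v := by
  have hfiber : ∀ T : Finset (Fin n), #T ≤ t →
      {x ∈ ballFinset n t kp km | ({i | x i ≠ 0} : Finset (Fin n)) = T} =
        {x ∈ Fintype.piFinset fun _ : Fin n => Icc (-km) kp |
          ({i | x i ≠ 0} : Finset (Fin n)) = T} := by
    intro T hT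
    rw [ballFinset, filter_filter]
    refine filter_congr fun x _ => and_iff_right_of_imp fun hx => ?_
    rwa [wt, hx]
  rw [← sum_biUnion ((pairwise_disjoint_powersetCard _).set_pairwise _),
    ← sum_fiberwise_of_maps_to (g := fun x => ({i | x i ≠ 0} : Finset (Fin n)))]
  · refine sum_congr rfl fun T hT => ?_
    obtain ⟨j, hj, hTj⟩ := mem_biUnion.1 hT
    rw [hfiber T ((mem_powersetCard.1 hTj).2.trans_le (Nat.lt_succ_iff.1 (mem_range.1 hj))),
      sum_filter_support_eq_prod (by simp; omega) f hf]
  · intro x hx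
    exact mem_biUnion.2 ⟨wt x, mem_range.2 (Nat.lt_succ_of_le (mem_filter.1 hx).2),
      mem_powersetCard.2 ⟨subset_univ _, rfl⟩⟩

lemma card_ballFinset (hkm : 0 ≤ km) (hkp : 0 ≤ kp) :
    (#(ballFinset n t kp km) : ℤ) = ∑ j ∈ range (t + 1), (n.choose j : ℤ) * (kp + km) ^ j := by
  have h := sum_ballFinset_prod (n := n) (t := t) hkm hkp (fun _ _ => (1 : ℤ)) fun _ => rfl
  simp only [prod_const_one, sum_const, nsmul_one, card_Icc_erase_zero hkm hkp,
    prod_const] at h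
  rw [h]
  refine sum_congr rfl fun j _ => ?_
  rw [sum_powersetCard j univ (fun m => (kp + km) ^ m), card_univ, Fintype.card_fin, nsmul_eq_mul]

lemma two_mul_sum_ballFinset_two_prod {R : Type*} [CommRing R] (hkm : 0 ≤ km) (hkp : 0 ≤ kp)
    (f : Fin n → ℤ → R) (hf : ∀ i, f i 0 = 1) :
    2 * ∑ x ∈ ballFinset n 2 kp km, ∏ i, f i (x i) =
      2 + 2 * ∑ i, ∑ v ∈ (Icc (-km) kp).erase 0, f i v +
        ((∑ i, ∑ v ∈ (Icc (-km) kp).erase 0, f i v) ^ 2 -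
          ∑ i, (∑ v ∈ (Icc (-km) kp).erase 0, f i v) ^ 2) := by
  rw [sum_ballFinset_prod hkm hkp f hf, sum_range_succ, sum_range_succ, sum_range_one,
    powersetCard_zero, powersetCard_one, sum_singleton, prod_empty, sum_map, mul_add, mul_add,
    two_mul_sum_powersetCard_two]
  simp only [Function.Embedding.coeFn_mk, prod_singleton]
  ring

end Ball

section Tiling

variable {n : ℕ} {Λ : AddSubgroup (Fin n → ℤ)}

lemma Tiles.bijOn_mk {B : Set (Fin n → ℤ)} (h : Tiles B Λ) :
    Set.BijOn (QuotientAddGroup.mk : (Fin n → ℤ) → (Fin n → ℤ) ⧸ Λ) B Set.univ := by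
  refine ⟨Set.mapsTo_univ _ _, fun x hx y hy hxy => ?_, fun q _ => ?_⟩
  · obtain ⟨p, -, huniq⟩ := h x
    have hyx : x - y ∈ Λ := by simpa [sub_eq_neg_add] using QuotientAddGroup.eq.1 hxy.symm
    have h₁ := huniq (x - y, y) ⟨hyx, hy, (sub_add_cancel x y).symm⟩
    have h₂ := huniq (0, x) ⟨Λ.zero_mem, hx, by simp⟩
    exact congrArg Prod.snd (h₂.trans h₁.symm)
  · obtain ⟨z, rfl⟩ := QuotientAddGroup.mk_surjective q
    obtain ⟨⟨v, b⟩, ⟨hv, hb, rfl⟩, -⟩ := h z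
    exact ⟨b, hb, QuotientAddGroup.eq.2 (by simpa using hv)⟩

lemma Tiles.finite_quotient {B : Set (Fin n → ℤ)} (h : Tiles B Λ) (hB : B.Finite) :
    Finite ((Fin n → ℤ) ⧸ Λ) :=
  Set.finite_univ_iff.1 ((hB.image _).subset h.bijOn_mk.surjOn)

lemma Tiles.card_quotient {B : Finset (Fin n → ℤ)} (h : Tiles (B : Set (Fin n → ℤ)) Λ) :
    Nat.card ((Fin n → ℤ) ⧸ Λ) = #B := by
  rw [← Nat.card_univ, ← Nat.card_congr h.bijOn_mk.equiv, Nat.card_coe_set_eq,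
    Set.ncard_coe_finset]

lemma Tiles.sum_comp_mk {M : Type*} [AddCommMonoid M] {B : Finset (Fin n → ℤ)}
    (h : Tiles (B : Set (Fin n → ℤ)) Λ)
    [Fintype ((Fin n → ℤ) ⧸ Λ)] (g : (Fin n → ℤ) ⧸ Λ → M) :
    ∑ x ∈ B, g x = ∑ q, g q :=
  sum_nbij _ (fun _ _ => mem_univ _) h.bijOn_mk.injOn (by simpa using h.bijOn_mk.surjOn)
    fun _ _ => rfl

end Tiling

lemma exists_addMonoidHom_zmod_two_ne_zero {G : Type*} [AddCommGroup G] [Finite G]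
    (h : Even (Nat.card G)) : ∃ φ : G →+ ZMod 2, φ ≠ 0 := by
  obtain ⟨a, ha⟩ := exists_prime_addOrderOf_dvd_card' 2 (even_iff_two_dvd.1 h)
  have ha₀ : a ≠ 0 := by
    rintro rfl
    simp at ha
  have h2a : (2 : ℤ) • a = 0 := by
    rw [two_zsmul, ← two_nsmul, ← ha, addOrderOf_nsmul_eq_zero]
  let double : G →+ G := zsmulAddGroupHom 2
  have hdouble : ¬ Function.Surjective double := fun hs =>
    ha₀ (Finite.injective_iff_surjective.2 hs (by simp [double, h2a]))
  obtain ⟨c, hc⟩ := not_forall.1 hdouble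
  let H := double.range
  -- `G ⧸ 2G` is an `𝔽₂`-vector space, nonzero because `c ∉ 2G`; take a functional nonzero at `c`.
  let _ : Module (ZMod 2) (G ⧸ H) := AddCommGroup.zmodModule fun x =>
    QuotientAddGroup.induction_on x fun y =>
      (QuotientAddGroup.eq_zero_iff _).2 ⟨y, by simp [double, two_zsmul, two_nsmul]⟩
  obtain ⟨f, hf⟩ := Module.Projective.exists_dual_ne_zero (ZMod 2)
    fun h0 => hc (AddMonoidHom.mem_range.1 ((QuotientAddGroup.eq_zero_iff c).1 h0))
  exact ⟨f.toAddMonoidHom.comp (QuotientAddGroup.mk' H),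
    fun h0 => hf (by simpa using DFunLike.congr_fun h0 c)⟩

lemma AddChar.map_sum_eq_prod {ι A M : Type*} [AddCommMonoid A] [CommMonoid M] (ψ : AddChar A M)
    (s : Finset ι) (f : ι → A) : ψ (∑ i ∈ s, f i) = ∏ i ∈ s, ψ (f i) := by
  induction s using Finset.cons_induction with
  | empty => simp
  | cons a s ha ih => rw [sum_cons, prod_cons, AddChar.map_add_eq_mul, ih]

def negOneChar : AddChar (ZMod 2) ℤ := AddChar.zmodChar 2 (by norm_num : (-1 : ℤ) ^ 2 = 1)

lemma sum_Icc_negOneChar (a b : ℤ) (h : Even (b + 1 - a)) :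
    ∑ v ∈ Icc a b, negOneChar v = 0 := by
  have hN : Even (b + 1 - a).toNat := by
    obtain ⟨r, hr⟩ := h
    exact ⟨r.toNat, by omega⟩
  rw [Int.Icc_eq_finset_map, sum_map]
  simp only [Function.Embedding.trans_apply, Nat.castEmbedding_apply, addLeftEmbedding_apply,
    Int.cast_add, Int.cast_natCast, AddChar.map_add_eq_mul, negOneChar, AddChar.zmodChar_apply']
  rw [← mul_sum, neg_one_geom_sum, if_pos hN, mul_zero]

lemma sum_Icc_erase_zero_negOneChar_comp {kp km : ℤ} (hkm : 0 ≤ km) (hkp : 0 ≤ kp)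
    (hk : Odd (kp + km)) (θ : ℤ →+ ZMod 2) :
    ∑ v ∈ (Icc (-km) kp).erase 0, negOneChar (θ v) = kp + km ∨
      ∑ v ∈ (Icc (-km) kp).erase 0, negOneChar (θ v) = -1 := by
  have hθ : θ 1 = 0 ∨ θ 1 = 1 := by generalize θ 1 = c; decide +revert
  rcases hθ with h | h
  · left
    have hθv : ∀ v, θ v = 0 := fun v => by rw [θ.apply_int, h, smul_zero]
    simp [hθv, card_Icc_erase_zero hkm hkp]
  · right
    have hθv : ∀ v, θ v = v := fun v => by rw [θ.apply_int, h, zsmul_one]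
    simp only [hθv]
    obtain ⟨j, hj⟩ := hk
    rw [sum_erase_eq_sub (by simp; omega), sum_Icc_negOneChar _ _ ⟨j + 1, by omega⟩]
    simp

lemma negOneChar_compAddMonoidHom_ne_one {G : Type*} [AddGroup G] {φ : G →+ ZMod 2}
    (hφ : φ ≠ 0) : negOneChar.compAddMonoidHom φ ≠ 1 := by
  obtain ⟨q, hq⟩ := DFunLike.ne_iff.1 hφ
  have hq₁ : φ q = 1 := by
    rw [AddMonoidHom.zero_apply] at hq
    generalize φ q = c at hq
    revert c
    decide
  exact AddChar.ne_one_iff.2 ⟨q, by simp [hq₁]; decide⟩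

lemma Tiles.sum_negOneChar_eq_zero {n : ℕ} {Λ : AddSubgroup (Fin n → ℤ)}
    {B : Finset (Fin n → ℤ)} (h : Tiles (B : Set (Fin n → ℤ)) Λ)
    {φ : (Fin n → ℤ) ⧸ Λ →+ ZMod 2} (hφ : φ ≠ 0) :
    ∑ x ∈ B, negOneChar (φ x) = 0 := by
  have := h.finite_quotient B.finite_toSet
  let _ := Fintype.ofFinite ((Fin n → ℤ) ⧸ Λ)
  rw [h.sum_comp_mk fun q => negOneChar (φ q)]
  exact AddChar.sum_eq_zero_of_ne_one (negOneChar_compAddMonoidHom_ne_one hφ)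

lemma odd_of_even_mul_sq_add_mul_add_one {a b k : ℤ} (h : Even (a * k ^ 2 + b * k + 1)) :
    Odd k := by
  rw [← Int.not_even_iff_odd]
  intro hk
  rw [Int.even_add_one] at h
  exact h (((hk.pow_of_ne_zero two_ne_zero).mul_left _).add (hk.mul_left _))

theorem stmt_13_general (n : ℕ) (kp km : ℤ)
    (hkm : 0 ≤ km) (hkp : km ≤ kp)
    (hex : ∃ Λ : AddSubgroup (Fin n → ℤ),
      Tiles (errBall n 2 kp km) (Λ : Set (Fin n → ℤ)))
    (heven : Even ((n.choose 2 : ℤ) * (kp + km) ^ 2 + (n : ℤ) * (kp + km) + 1)) :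
    ∃ ℓ : ℤ, 4 * (kp + km) * (n : ℤ) = 4 * ℓ ^ 2 - (kp + km - 3) ^ 2 + 8 := by
  obtain ⟨Λ, hΛ⟩ := hex
  have hkp₀ : 0 ≤ kp := hkm.trans hkp
  rw [← coe_ballFinset] at hΛ
  have := hΛ.finite_quotient (finite_toSet _)
  have hk : Odd (kp + km) := odd_of_even_mul_sq_add_mul_add_one heven
  obtain ⟨φ, hφ⟩ := exists_addMonoidHom_zmod_two_ne_zero (G := (Fin n → ℤ) ⧸ Λ) (by
    rw [hΛ.card_quotient, ← Int.even_coe_nat, card_ballFinset hkm hkp₀]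
    convert heven using 1
    simp [sum_range_succ]
    ring)
  set S : Fin n → ℤ := fun i =>
    ∑ v ∈ (Icc (-km) kp).erase 0, negOneChar (φ (Pi.single i v : Fin n → ℤ))
  have hball : 2 + 2 * ∑ i, S i + ((∑ i, S i) ^ 2 - ∑ i, S i ^ 2) = 0 := by
    rw [← two_mul_sum_ballFinset_two_prod hkm hkp₀ _ fun i => by simp]
    simp_rw [← AddChar.map_sum_eq_prod, ← map_sum, ← QuotientAddGroup.mk_sum, univ_sum_single]
    rw [hΛ.sum_negOneChar_eq_zero hφ, mul_zero]
  have hS : ∀ i, S i = kp + km ∨ S i = -1 := fun i =>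
    sum_Icc_erase_zero_negOneChar_comp hkm hkp₀ hk
      ((φ.comp (QuotientAddGroup.mk' Λ)).comp (AddMonoidHom.single (fun _ => ℤ) i))
  have hnk : ∑ i, (S i ^ 2 - (kp + km - 1) * S i) = n * (kp + km) :=
    calc ∑ i, (S i ^ 2 - (kp + km - 1) * S i) = ∑ _i : Fin n, (kp + km) :=
          sum_congr rfl fun i _ => by rcases hS i with h | h <;> rw [h] <;> ring
      _ = n * (kp + km) := by simp
  rw [sum_sub_distrib, ← mul_sum] at hnk
  obtain ⟨j, hj⟩ := hk
  exact ⟨∑ i, S i + 1 - j, by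
    linear_combination (-4) * hnk - 4 * hball - (4 * ∑ i, S i - (kp + km) - 2 * j + 5) * hj⟩

theorem stmt_13 (n : ℕ) (kp km : ℤ) (hn : 2 ≤ n)
    (hkm : 0 ≤ km) (hkp : km ≤ kp) (hk0 : ¬(kp = 0 ∧ km = 0))
    (hex : ∃ Λ : AddSubgroup (Fin n → ℤ),
      Tiles (errBall n 2 kp km) (Λ : Set (Fin n → ℤ)))
    (heven : Even ((n.choose 2 : ℤ) * (kp + km) ^ 2 + (n : ℤ) * (kp + km) + 1)) :
    ∃ ℓ : ℤ, 4 * (kp + km) * (n : ℤ) = 4 * ℓ ^ 2 - (kp + km - 3) ^ 2 + 8 :=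
  stmt_13_general n kp km hkm hkp hex heven
end

section
/- Let G be a finite abelian group, n ≥ 1, and let s : Fin n → G be an injective map such that the partial splitting condition G ≥ {1} ◇₂ S holds for S = {s₁,…,sₙ}: the sums ∑ᵢ eᵢ·sᵢ over all e ∈ {0,1}ⁿ with 1 ≤ wt(e) ≤ 2 are pairwise distinct and nonzero. Let a, b, c, d ∈ S ∪ {0} with a ≠ b, c ≠ d, (a,b) ≠ (c,d), and a − b = c − d. Then a = d or b = c. Moreover, if additionally a = d = 0, then b = c. -/
open Finset

/-- The partial splitting condition `G ≥ M ◇ₜ S` : the sums `∑ i, e i • s i`, over all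
`e` with entries in `M ∪ {0}` and `1 ≤ wt e ≤ t`, are pairwise distinct and nonzero. -/
def PartialSplits {G : Type*} [AddCommGroup G] (M : Set ℤ) (t : ℕ) {n : ℕ}
    (s : Fin n → G) : Prop :=
  (∀ e : Fin n → ℤ, (∀ i, e i ∈ M ∨ e i = 0) → 1 ≤ wt e → wt e ≤ t →
      ∑ i, e i • s i ≠ 0) ∧
  ∀ e f : Fin n → ℤ, (∀ i, e i ∈ M ∨ e i = 0) → (∀ i, f i ∈ M ∨ f i = 0) →
    1 ≤ wt e → wt e ≤ t → 1 ≤ wt f → wt f ≤ t →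
    ∑ i, e i • s i = ∑ i, f i • s i → e = f

/-!
For `x ≠ y` in `S ∪ {0}`, the sum `x + y` is the sum of the nonempty set `{x, y} \ {0} ⊆ S` of at
most two elements, and the splitting condition says that such a set is determined by its sum and
that the sum is nonzero. Since `a - b = c - d` means `a + d = b + c`, if `a ≠ d` and `b ≠ c` then
`{a, d} = {b, c}`, which `a ≠ b` and `(a, b) ≠ (c, d)` exclude; and if `a = d = 0` then
`b + c = 0`, which forces `b = c`.
-/

theorem Finset.eq_of_erase_eq_of_card_eq {α : Type*} [DecidableEq α] {A B : Finset α} {z : α}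
    (h : A.erase z = B.erase z) (hcard : #A = #B) : A = B := by
  have hz : z ∈ A ↔ z ∈ B := by
    constructor <;> intro hz <;> by_contra hz'
    · have := card_erase_add_one hz
      rw [h, erase_eq_of_notMem hz'] at this
      omega
    · have := card_erase_add_one hz
      rw [← h, erase_eq_of_notMem hz'] at this
      omega
  ext w
  by_cases hw : w = z
  · rw [hw, hz]
  · simpa [hw] using congrArg (w ∈ ·) h

section

variable {α : Type*} [DecidableEq α] {x y : α}

theorem one_le_card_pair_erase_zero [Zero α] (hxy : x ≠ y) :
    1 ≤ #(({x, y} : Finset α).erase 0) := by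
  have := pred_card_le_card_erase (s := {x, y}) (a := (0 : α))
  rw [card_pair hxy] at this
  omega

theorem card_pair_erase_zero_le_two [Zero α] : #(({x, y} : Finset α).erase 0) ≤ 2 :=
  (card_erase_le).trans card_le_two

theorem sum_pair_erase_zero [AddCommMonoid α] (hxy : x ≠ y) :
    ∑ z ∈ ({x, y} : Finset α).erase 0, z = x + y := by
  rw [sum_erase _ (a := (0 : α)) rfl, sum_pair hxy]

end

section

variable {G : Type*} [AddCommGroup G] {n : ℕ} {s : Fin n → G}

theorem wt_indicator (I : Finset (Fin n)) : wt (fun i => if i ∈ I then (1 : ℤ) else 0) = #I := by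
  simp [wt]

theorem sum_indicator_smul (I : Finset (Fin n)) (s : Fin n → G) :
    ∑ i, (if i ∈ I then (1 : ℤ) else 0) • s i = ∑ i ∈ I, s i := by
  simp only [ite_smul, one_smul, zero_smul, sum_ite_mem, univ_inter]

theorem PartialSplits.sum_ne_zero (h : PartialSplits {1} 2 s) {I : Finset (Fin n)}
    (h₁ : 1 ≤ #I) (h₂ : #I ≤ 2) : ∑ i ∈ I, s i ≠ 0 := by
  rw [← sum_indicator_smul]
  exact h.1 _ (fun i => by split_ifs <;> simp) (by rwa [wt_indicator]) (by rwa [wt_indicator])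

theorem PartialSplits.eq_of_sum_eq (h : PartialSplits {1} 2 s) {I J : Finset (Fin n)}
    (hI₁ : 1 ≤ #I) (hI₂ : #I ≤ 2) (hJ₁ : 1 ≤ #J) (hJ₂ : #J ≤ 2)
    (hsum : ∑ i ∈ I, s i = ∑ i ∈ J, s i) : I = J := by
  rw [← sum_indicator_smul I, ← sum_indicator_smul J] at hsum
  have := h.2 _ _ (fun i => by split_ifs <;> simp) (fun i => by split_ifs <;> simp)
    (by rwa [wt_indicator]) (by rwa [wt_indicator]) (by rwa [wt_indicator])
    (by rwa [wt_indicator]) hsum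
  ext i
  have hi := congrFun this i
  by_cases hI : i ∈ I <;> by_cases hJ : i ∈ J <;> simp_all

variable [DecidableEq G]

theorem PartialSplits.sum_ne_zero_of_subset_range (h : PartialSplits {1} 2 s)
    (hs : Function.Injective s) {A : Finset G} (hA : ↑A ⊆ Set.range s)
    (h₁ : 1 ≤ #A) (h₂ : #A ≤ 2) : ∑ x ∈ A, x ≠ 0 := by
  obtain ⟨I, rfl⟩ := subset_univ_image_iff.1 fun x hx => by simpa using hA hx
  rw [card_image_of_injective I hs] at h₁ h₂
  rw [sum_image hs.injOn]
  exact h.sum_ne_zero h₁ h₂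

theorem PartialSplits.eq_of_sum_eq_of_subset_range (h : PartialSplits {1} 2 s)
    (hs : Function.Injective s) {A B : Finset G} (hA : ↑A ⊆ Set.range s)
    (hB : ↑B ⊆ Set.range s) (hA₁ : 1 ≤ #A) (hA₂ : #A ≤ 2) (hB₁ : 1 ≤ #B) (hB₂ : #B ≤ 2)
    (hsum : ∑ x ∈ A, x = ∑ x ∈ B, x) : A = B := by
  obtain ⟨I, rfl⟩ := subset_univ_image_iff.1 fun x hx => by simpa using hA hx
  obtain ⟨J, rfl⟩ := subset_univ_image_iff.1 fun x hx => by simpa using hB hx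
  rw [card_image_of_injective _ hs] at hA₁ hA₂ hB₁ hB₂
  rw [sum_image hs.injOn, sum_image hs.injOn] at hsum
  rw [h.eq_of_sum_eq hA₁ hA₂ hB₁ hB₂ hsum]

variable {x y : G}

theorem pair_erase_zero_subset_range (hx : x ∈ Set.range s ∪ {0}) (hy : y ∈ Set.range s ∪ {0}) :
    ↑(({x, y} : Finset G).erase 0) ⊆ Set.range s := by
  intro z hz
  simp only [coe_erase, coe_pair, Set.mem_sdiff, Set.mem_insert_iff, Set.mem_singleton_iff] at hz
  obtain ⟨rfl | rfl, hz0⟩ := hz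
  · simpa [hz0] using hx
  · simpa [hz0] using hy

end

section

variable {G : Type*} [AddCommGroup G] {n : ℕ} {s : Fin n → G} {x y u v : G}

theorem PartialSplits.add_ne_zero (h : PartialSplits {1} 2 s) (hs : Function.Injective s)
    (hx : x ∈ Set.range s ∪ {0}) (hy : y ∈ Set.range s ∪ {0}) (hxy : x ≠ y) : x + y ≠ 0 := by
  classical
  rw [← sum_pair_erase_zero hxy]
  exact h.sum_ne_zero_of_subset_range hs (pair_erase_zero_subset_range hx hy)
    (one_le_card_pair_erase_zero hxy) card_pair_erase_zero_le_two

theorem PartialSplits.pair_eq_of_add_eq (h : PartialSplits {1} 2 s) (hs : Function.Injective s)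
    (hx : x ∈ Set.range s ∪ {0}) (hy : y ∈ Set.range s ∪ {0})
    (hu : u ∈ Set.range s ∪ {0}) (hv : v ∈ Set.range s ∪ {0})
    (hxy : x ≠ y) (huv : u ≠ v) (hsum : x + y = u + v) : ({x, y} : Set G) = {u, v} := by
  classical
  have herase : ({x, y} : Finset G).erase 0 = ({u, v} : Finset G).erase 0 := by
    refine h.eq_of_sum_eq_of_subset_range hs (pair_erase_zero_subset_range hx hy)
      (pair_erase_zero_subset_range hu hv) (one_le_card_pair_erase_zero hxy)
      card_pair_erase_zero_le_two (one_le_card_pair_erase_zero huv) card_pair_erase_zero_le_two ?_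
    rw [sum_pair_erase_zero hxy, sum_pair_erase_zero huv, hsum]
  have := Finset.eq_of_erase_eq_of_card_eq herase (by rw [card_pair hxy, card_pair huv])
  simpa using congrArg ((↑) : Finset G → Set G) this

end

theorem stmt_14_general (n : ℕ)
    (G : Type) [AddCommGroup G]
    (s : Fin n → G) (hs : Function.Injective s)
    (hsplit : PartialSplits {1} 2 s)
    (a b c d : G)
    (ha : a ∈ Set.range s ∪ {0}) (hb : b ∈ Set.range s ∪ {0})
    (hc : c ∈ Set.range s ∪ {0}) (hd : d ∈ Set.range s ∪ {0})
    (hab : a ≠ b) (hne : (a, b) ≠ (c, d))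
    (heq : a - b = c - d) :
    (a = d ∨ b = c) ∧ (a = 0 → d = 0 → b = c) := by
  have hsum : a + d = b + c := by rw [sub_eq_sub_iff_add_eq_add.1 heq, add_comm]
  constructor
  · by_contra! h
    rcases Set.pair_eq_pair_iff.1 (hsplit.pair_eq_of_add_eq hs ha hd hb hc h.1 h.2 hsum) with
      ⟨rfl, -⟩ | ⟨rfl, rfl⟩
    · exact hab rfl
    · exact hne rfl
  · rintro rfl rfl
    by_contra hbc
    exact hsplit.add_ne_zero hs hb hc hbc (by rw [← hsum, add_zero])

theorem stmt_14 (n : ℕ) (hn : 1 ≤ n)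
    (G : Type) [AddCommGroup G] [Fintype G]
    (s : Fin n → G) (hs : Function.Injective s)
    (hsplit : PartialSplits {1} 2 s)
    (a b c d : G)
    (ha : a ∈ Set.range s ∪ {0}) (hb : b ∈ Set.range s ∪ {0})
    (hc : c ∈ Set.range s ∪ {0}) (hd : d ∈ Set.range s ∪ {0})
    (hab : a ≠ b) (hcd : c ≠ d) (hne : (a, b) ≠ (c, d))
    (heq : a - b = c - d) :
    (a = d ∨ b = c) ∧ (a = 0 → d = 0 → b = c) :=
  stmt_14_general n G s hs hsplit a b c d ha hb hc hd hab hne heq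
end

section
/- Let G be a finite abelian group, n ≥ 1, and let s : Fin n → G be an injective map such that the partial splitting condition G ≥ {1} ◇₂ S holds for S = {s₁,…,sₙ}: the sums ∑ᵢ eᵢ·sᵢ over all e ∈ {0,1}ⁿ with 1 ≤ wt(e) ≤ 2 are pairwise distinct and nonzero. Then |G| + m₂(G) ≥ n² − n + 1, where m₂(G) is the number of elements x ∈ G with x ≠ 0 and 2x = 0. -/
open Finset

/-!
A difference `s i - s j` with `i ≠ j` is nonzero, and since sums of at most two of the `s i`
are distinct, two ordered pairs can only have the same difference when they share an index:
`s i - s j = s k - s i`, i.e. `s i` is the midpoint of `s j` and `s k`. If `j = k` the common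
difference has order two, and the pair with `j < i` is sent to a second copy of that element.
Otherwise `s i` is the midpoint of exactly one pair `{s j, s k}`, and `(i, j)` is sent to `s i`
or to `-s i` according as `j < k` or `k < j`; neither is a difference of two of the `s i`. This
injects the `n² - n` ordered pairs into `(G ∖ {0}) ⊔ {x ≠ 0 | 2 • x = 0}`.
-/

def indicatorVec {n : ℕ} (T : Finset (Fin n)) : Fin n → ℤ := fun k => if k ∈ T then 1 else 0

section Indicator

variable {n : ℕ}

theorem wt_indicatorVec (T : Finset (Fin n)) : wt (indicatorVec T) = T.card := by
  simp [wt, indicatorVec]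

theorem indicatorVec_mem_one_or_eq_zero (T : Finset (Fin n)) (k : Fin n) :
    indicatorVec T k ∈ ({1} : Set ℤ) ∨ indicatorVec T k = 0 := by
  by_cases hk : k ∈ T <;> simp [indicatorVec, hk]

theorem sum_indicatorVec_smul {G : Type*} [AddCommGroup G] (s : Fin n → G)
    (T : Finset (Fin n)) : ∑ k, indicatorVec T k • s k = ∑ k ∈ T, s k := by
  simp [indicatorVec, ite_smul, Finset.sum_ite_mem]

theorem indicatorVec_injective : Function.Injective (indicatorVec (n := n)) := by
  intro T T' h
  ext k
  have := congrFun h k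
  by_cases hk : k ∈ T <;> by_cases hk' : k ∈ T' <;> simp_all [indicatorVec]

end Indicator

namespace PartialSplits

variable {G : Type*} [AddCommGroup G] {n : ℕ} {s : Fin n → G}

theorem sum_ne_zero_s16 (h : PartialSplits {1} 2 s) {T : Finset (Fin n)} (hT : T.Nonempty)
    (hT2 : T.card ≤ 2) : ∑ k ∈ T, s k ≠ 0 := by
  rw [← sum_indicatorVec_smul]
  exact h.1 _ (indicatorVec_mem_one_or_eq_zero T) (by rw [wt_indicatorVec]; exact hT.card_pos)
    (by rwa [wt_indicatorVec])

theorem eq_of_sum_eq_s16 (h : PartialSplits {1} 2 s) {T T' : Finset (Fin n)} (hT : T.Nonempty)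
    (hT2 : T.card ≤ 2) (hT' : T'.Nonempty) (hT2' : T'.card ≤ 2)
    (hsum : ∑ k ∈ T, s k = ∑ k ∈ T', s k) : T = T' := by
  rw [← sum_indicatorVec_smul s T, ← sum_indicatorVec_smul s T'] at hsum
  rw [← wt_indicatorVec] at hT2 hT2'
  refine indicatorVec_injective (h.2 _ _ (indicatorVec_mem_one_or_eq_zero T)
    (indicatorVec_mem_one_or_eq_zero T') ?_ hT2 ?_ hT2' hsum)
  · rw [wt_indicatorVec]
    exact hT.card_pos
  · rw [wt_indicatorVec]
    exact hT'.card_pos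

theorem injective (h : PartialSplits {1} 2 s) : Function.Injective s := fun i j hij =>
  singleton_injective (h.eq_of_sum_eq_s16 (singleton_nonempty i) (by simp) (singleton_nonempty j)
    (by simp) (by simpa using hij))

theorem ne_zero (h : PartialSplits {1} 2 s) (i : Fin n) : s i ≠ 0 := by
  simpa using h.sum_ne_zero_s16 (singleton_nonempty i) (by simp)

theorem add_ne_zero_s16 (h : PartialSplits {1} 2 s) {i j : Fin n} (hij : i ≠ j) :
    s i + s j ≠ 0 := by
  simpa [hij] using h.sum_ne_zero_s16 (insert_nonempty i {j}) card_le_two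

theorem add_ne (h : PartialSplits {1} 2 s) {i j : Fin n} (hij : i ≠ j) (m : Fin n) :
    s i + s j ≠ s m := by
  intro hm
  have := congrArg card <| h.eq_of_sum_eq_s16 (insert_nonempty i {j}) card_le_two
    (singleton_nonempty m) (by simp) (by simpa [hij] using hm)
  simp [card_pair hij] at this

theorem add_eq_add (h : PartialSplits {1} 2 s) {i j k l : Fin n} (hij : i ≠ j) (hkl : k ≠ l)
    (he : s i + s j = s k + s l) : i = k ∧ j = l ∨ i = l ∧ j = k := by
  have hpair := h.eq_of_sum_eq_s16 (insert_nonempty i {j}) card_le_two (insert_nonempty k {l})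
    card_le_two (by simpa [hij, hkl] using he)
  rw [← coe_inj, coe_pair, coe_pair] at hpair
  exact Set.pair_eq_pair_iff.mp hpair

end PartialSplits

section Differences

variable {G : Type*} [AddCommGroup G] {n : ℕ}

open Classical in
noncomputable def diffRep (s : Fin n → G) (i j : Fin n) : G :=
  if ∃ k, j < k ∧ s i - s j = s k - s i then s i
  else if ∃ k, k < j ∧ s i - s j = s k - s i then -s i
  else s i - s j

open Classical in
noncomputable def diffCode (s : Fin n → G) (p : Fin n × Fin n) : G ⊕ G :=
  if s p.1 - s p.2 = s p.2 - s p.1 ∧ p.2 < p.1 then .inr (s p.1 - s p.2)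
  else .inl (diffRep s p.1 p.2)

theorem diffRep_of_not_midpoint {s : Fin n → G} {i j : Fin n}
    (hm : ∀ k, j ≠ k → s i - s j ≠ s k - s i) : diffRep s i j = s i - s j := by
  rw [diffRep, if_neg, if_neg]
  · rintro ⟨k, hkj, hk⟩
    exact hm k hkj.ne' hk
  · rintro ⟨k, hjk, hk⟩
    exact hm k hjk.ne hk

end Differences

namespace PartialSplits

variable {G : Type*} [AddCommGroup G] {n : ℕ} {s : Fin n → G}

theorem midpoint_add_ne_zero (h : PartialSplits {1} 2 s) {i j k : Fin n} (hjk : j ≠ k)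
    (hm : s i - s j = s k - s i) (m : Fin n) : s i + s m ≠ 0 := by
  rcases eq_or_ne i m with rfl | him
  · rw [sub_eq_sub_iff_add_eq_add.mp hm, add_comm]
    exact h.add_ne_zero_s16 hjk
  · exact h.add_ne_zero_s16 him

theorem midpoint_ne_sub (h : PartialSplits {1} 2 s) {i j k a b : Fin n} (hjk : j ≠ k)
    (hm : s i - s j = s k - s i) (hab : a ≠ b) : s i ≠ s a - s b := by
  intro he
  have hia : s i + s b = s a := by rw [he, sub_add_cancel]
  rcases eq_or_ne i b with rfl | hib
  · rw [sub_eq_sub_iff_add_eq_add.mp hm, add_comm] at hia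
    exact h.add_ne hjk a hia
  · exact h.add_ne hib a hia

theorem eq_of_sub_eq_sub (h : PartialSplits {1} 2 s) {i j k l : Fin n} (hij : i ≠ j)
    (he : s i - s j = s k - s l) : i = k ∧ j = l ∨ i = l ∨ j = k := by
  by_cases hil : i = l
  · exact .inr (.inl hil)
  by_cases hjk : j = k
  · exact .inr (.inr hjk)
  rcases h.add_eq_add hil (Ne.symm hjk) (sub_eq_sub_iff_add_eq_add.mp he) with
    ⟨hik, hlj⟩ | ⟨hij', -⟩
  · exact .inl ⟨hik, hlj.symm⟩
  · exact absurd hij' hij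

theorem eq_or_swap_of_sub_eq_sub (h : PartialSplits {1} 2 s) {i j k l : Fin n} (hij : i ≠ j)
    (hsw : s i - s j = s j - s i) (he : s i - s j = s k - s l) :
    i = k ∧ j = l ∨ i = l ∧ j = k := by
  rcases h.eq_of_sub_eq_sub hij he with hikjl | rfl | rfl
  · exact .inl hikjl
  · exact .inr ⟨rfl, h.injective (sub_left_inj.mp (hsw.symm.trans he))⟩
  · exact .inr ⟨h.injective (sub_right_inj.mp (hsw.symm.trans he)), rfl⟩

theorem diffRep_of_midpoint (h : PartialSplits {1} 2 s) {i j k : Fin n} (hjk : j ≠ k)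
    (hm : s i - s j = s k - s i) : diffRep s i j = if j < k then s i else -s i := by
  rcases hjk.lt_or_gt with hlt | hgt
  · rw [diffRep, if_pos ⟨k, hlt, hm⟩, if_pos hlt]
  · rw [diffRep, if_neg, if_pos ⟨k, hgt, hm⟩, if_neg hgt.not_gt]
    rintro ⟨k', hjk', hm'⟩
    obtain rfl : k' = k := h.injective (sub_left_inj.mp (hm'.symm.trans hm))
    exact hjk'.not_gt hgt

theorem diffRep_ne_zero (h : PartialSplits {1} 2 s) {i j : Fin n} (hij : i ≠ j) :
    diffRep s i j ≠ 0 := by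
  unfold diffRep
  split_ifs
  · exact h.ne_zero i
  · exact neg_ne_zero.mpr (h.ne_zero i)
  · exact sub_ne_zero.mpr (h.injective.ne hij)

theorem diffRep_eq_of_midpoint (h : PartialSplits {1} 2 s) {i j k i' j' k' : Fin n}
    (hjk : j ≠ k) (hm : s i - s j = s k - s i) (hjk' : j' ≠ k')
    (hm' : s i' - s j' = s k' - s i')
    (he : diffRep s i j = diffRep s i' j') : i = i' ∧ j = j' := by
  rw [h.diffRep_of_midpoint hjk hm, h.diffRep_of_midpoint hjk' hm'] at he
  obtain rfl : i = i' := by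
    refine h.injective ?_
    split_ifs at he
    · exact he
    · exact absurd (eq_neg_iff_add_eq_zero.mp he) (h.midpoint_add_ne_zero hjk hm i')
    · exact absurd (eq_neg_iff_add_eq_zero.mp he.symm) (h.midpoint_add_ne_zero hjk' hm' i)
    · exact neg_inj.mp he
  have hsum : s j + s k = s j' + s k' := by
    rw [add_comm, ← sub_eq_sub_iff_add_eq_add.mp hm, sub_eq_sub_iff_add_eq_add.mp hm', add_comm]
  rcases h.add_eq_add hjk hjk' hsum with ⟨hj, -⟩ | ⟨rfl, rfl⟩
  · exact ⟨rfl, hj⟩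
  · rcases hjk.lt_or_gt with hlt | hgt
    · rw [if_pos hlt, if_neg hlt.not_gt] at he
      exact absurd (eq_neg_iff_add_eq_zero.mp he) (h.midpoint_add_ne_zero hjk hm i)
    · rw [if_neg hgt.not_gt, if_pos hgt] at he
      exact absurd (eq_neg_iff_add_eq_zero.mp he.symm) (h.midpoint_add_ne_zero hjk hm i)

theorem diffRep_ne_of_midpoint (h : PartialSplits {1} 2 s) {i j k a b : Fin n} (hjk : j ≠ k)
    (hm : s i - s j = s k - s i) (hab : a ≠ b)
    (hm' : ∀ c, b ≠ c → s a - s b ≠ s c - s a) :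
    diffRep s i j ≠ diffRep s a b := by
  rw [h.diffRep_of_midpoint hjk hm, diffRep_of_not_midpoint hm']
  split_ifs
  · exact h.midpoint_ne_sub hjk hm hab
  · intro he
    exact h.midpoint_ne_sub hjk hm hab.symm (by rw [← neg_sub, ← he, neg_neg])

theorem eq_of_sub_eq_sub_of_not_midpoint (h : PartialSplits {1} 2 s) {i j k l : Fin n}
    (hij : i ≠ j) (hsw : ¬(s i - s j = s j - s i ∧ j < i))
    (hsw' : ¬(s k - s l = s l - s k ∧ l < k)) (hm : ∀ c, j ≠ c → s i - s j ≠ s c - s i)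
    (hm' : ∀ c, l ≠ c → s k - s l ≠ s c - s k) (he : s i - s j = s k - s l) :
    i = k ∧ j = l := by
  rcases h.eq_of_sub_eq_sub hij he with hikjl | rfl | rfl
  · exact hikjl
  · obtain rfl : j = k := not_not.mp fun hjk => hm k hjk he
    rcases hij.lt_or_gt with hlt | hgt
    · exact absurd ⟨he.symm, hlt⟩ hsw'
    · exact absurd ⟨he, hgt⟩ hsw
  · obtain rfl : l = i := not_not.mp fun hli => hm' i hli he.symm
    rcases hij.lt_or_gt with hlt | hgt
    · exact absurd ⟨he.symm, hlt⟩ hsw'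
    · exact absurd ⟨he, hgt⟩ hsw

theorem eq_of_diffRep_eq (h : PartialSplits {1} 2 s) {i j k l : Fin n} (hij : i ≠ j)
    (hkl : k ≠ l) (hsw : ¬(s i - s j = s j - s i ∧ j < i))
    (hsw' : ¬(s k - s l = s l - s k ∧ l < k)) (he : diffRep s i j = diffRep s k l) :
    i = k ∧ j = l := by
  by_cases hm : ∃ c, j ≠ c ∧ s i - s j = s c - s i <;>
    by_cases hm' : ∃ c, l ≠ c ∧ s k - s l = s c - s k
  · obtain ⟨c, hc, hmc⟩ := hm
    obtain ⟨c', hc', hmc'⟩ := hm'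
    exact h.diffRep_eq_of_midpoint hc hmc hc' hmc' he
  · obtain ⟨c, hc, hmc⟩ := hm
    push Not at hm'
    exact absurd he (h.diffRep_ne_of_midpoint hc hmc hkl hm')
  · obtain ⟨c', hc', hmc'⟩ := hm'
    push Not at hm
    exact absurd he.symm (h.diffRep_ne_of_midpoint hc' hmc' hij hm)
  · push Not at hm hm'
    rw [diffRep_of_not_midpoint hm, diffRep_of_not_midpoint hm'] at he
    exact h.eq_of_sub_eq_sub_of_not_midpoint hij hsw hsw' hm hm' he

open Classical in
theorem diffCode_mem [Fintype G] (h : PartialSplits {1} 2 s) {p : Fin n × Fin n}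
    (hp : p.1 ≠ p.2) :
    diffCode s p ∈ ({0}ᶜ : Finset G).disjSum {x : G | x ≠ 0 ∧ 2 • x = 0}.toFinset := by
  have hne : s p.1 - s p.2 ≠ 0 := sub_ne_zero.mpr (h.injective.ne hp)
  unfold diffCode
  split_ifs with hsw
  · simp only [inr_mem_disjSum, Set.mem_toFinset]
    refine ⟨hne, ?_⟩
    rw [two_smul]
    nth_rw 2 [hsw.1]
    abel
  · simp only [inl_mem_disjSum, mem_compl, mem_singleton]
    exact h.diffRep_ne_zero hp

theorem diffCode_injOn (h : PartialSplits {1} 2 s) :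
    Set.InjOn (diffCode s) (univ.offDiag : Finset (Fin n × Fin n)) := by
  rintro ⟨i, j⟩ hij ⟨k, l⟩ hkl he
  simp only [coe_offDiag, Set.mem_offDiag, coe_univ, Set.mem_univ, true_and] at hij hkl
  unfold diffCode at he
  split_ifs at he with hsw hsw' hsw'
  · rcases h.eq_or_swap_of_sub_eq_sub hij hsw.1 (Sum.inr.inj he) with
      ⟨rfl, rfl⟩ | ⟨rfl, rfl⟩
    · rfl
    · exact absurd (hsw.2.trans hsw'.2) (lt_irrefl _)
  · obtain ⟨rfl, rfl⟩ := h.eq_of_diffRep_eq hij hkl hsw hsw' (Sum.inl.inj he)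
    rfl

theorem mul_self_sub_self_le [Fintype G] (h : PartialSplits {1} 2 s) :
    n * n - n ≤ Fintype.card G - 1 + {x : G | x ≠ 0 ∧ 2 • x = 0}.ncard := by
  classical
  have hcard := card_le_card_of_injOn (diffCode s)
    (fun p hp => h.diffCode_mem (mem_offDiag.mp hp).2.2) h.diffCode_injOn
  rw [Set.ncard_eq_toFinset_card']
  rwa [offDiag_card, card_univ, Fintype.card_fin, card_disjSum, card_compl, card_singleton]
    at hcard

end PartialSplits

theorem stmt_16_general (n : ℕ)
    (G : Type) [AddCommGroup G] [Fintype G]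
    (s : Fin n → G)
    (hsplit : PartialSplits {1} 2 s) :
    n ^ 2 - n + 1 ≤ Fintype.card G + {x : G | x ≠ 0 ∧ 2 • x = 0}.ncard := by
  have hG : 0 < Fintype.card G := Fintype.card_pos
  have hpairs := hsplit.mul_self_sub_self_le
  rw [sq]
  omega

theorem stmt_16 (n : ℕ) (hn : 1 ≤ n)
    (G : Type) [AddCommGroup G] [Fintype G]
    (s : Fin n → G) (hs : Function.Injective s)
    (hsplit : PartialSplits {1} 2 s) :
    n ^ 2 - n + 1 ≤ Fintype.card G + {x : G | x ≠ 0 ∧ 2 • x = 0}.ncard :=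
  stmt_16_general n G s hsplit
end
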